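/- arXiv:1907.13201 — 2 statements merged into one kernel-verified Lean document; each statement's English description precedes it below -/
import Mathlib

section
/- Let V be a faithful finite-dimensional kA-module over a finite field k of characteristic p. Assume that A = B × C where B is a cyclic p-group and C is a p'-group which has a regular orbit on every C-invariant irreducible section of V. Then A has a regular orbit on V, i.e., there exists v ∈ V with C_A(v) = 1. -/
open Submodule Subgroup Finset

section Aux

variable {k V : Type*} [Field k] [AddCommGroup V] [Module k V]

private lemma endo_fix_pow (F : Module.End k V) {v : V} (h : F v = v) (n : ℕ) :
    (F ^ n) v = v := by
  induction n with
  | zero => simp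
  | succ n ih => rw [pow_succ, Module.End.mul_apply, h, ih]

variable {C : Type*} [Group C] [Fintype C]

/-- Averaging (Maschke) projection onto an invariant subspace. -/
private lemma maschke_proj (σ : Representation k C V)
    (hcard : (Fintype.card C : k) ≠ 0)
    (W' : Submodule k V) (hW' : ∀ c : C, ∀ x ∈ W', σ c x ∈ W') :
    ∃ π : V →ₗ[k] V, (∀ x, π x ∈ W') ∧ (∀ x ∈ W', π x = x) ∧
      (∀ c x, π (σ c x) = σ c (π x)) := by
  classical
  obtain ⟨q, hq⟩ := Submodule.exists_isCompl W'
  set p₀ : V →ₗ[k] V := W'.subtype ∘ₗ (W'.projectionOnto q hq) with hp₀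
  have hp₀mem : ∀ x, p₀ x ∈ W' := fun x => SetLike.coe_mem _
  have hp₀id : ∀ x ∈ W', p₀ x = x := by
    intro x hx
    have := Submodule.linearProjOfIsCompl_apply_left hq ⟨x, hx⟩
    simp only [hp₀, LinearMap.comp_apply, this, Submodule.coe_subtype]
  set π : V →ₗ[k] V :=
    (Fintype.card C : k)⁻¹ • ∑ c : C, (σ c) ∘ₗ p₀ ∘ₗ (σ c⁻¹) with hπ
  have happly : ∀ x, π x = (Fintype.card C : k)⁻¹ • ∑ c : C, σ c (p₀ (σ c⁻¹ x)) := by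
    intro x
    simp [hπ, LinearMap.sum_apply]
  have hσσ : ∀ (c c' : C) (x : V), σ c (σ c' x) = σ (c * c') x := by
    intro c c' x
    rw [map_mul]; rfl
  refine ⟨π, ?_, ?_, ?_⟩
  · intro x
    rw [happly]
    exact Submodule.smul_mem _ _ (Submodule.sum_mem _ fun c _ => hW' c _ (hp₀mem _))
  · intro x hx
    rw [happly]
    have : ∀ c : C, σ c (p₀ (σ c⁻¹ x)) = x := by
      intro c
      rw [hp₀id _ (hW' c⁻¹ x hx), hσσ, mul_inv_cancel, map_one]; rfl
    rw [Finset.sum_congr rfl fun c _ => this c, Finset.sum_const, Finset.card_univ]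
    rw [← Nat.cast_smul_eq_nsmul k, smul_smul, inv_mul_cancel₀ hcard, one_smul]
  · intro c₀ x
    rw [happly, happly, map_smul, map_sum]
    congr 1
    have := Fintype.sum_bijective (fun c => c₀⁻¹ * c)
      (Group.mulLeft_bijective c₀⁻¹)
      (fun c => σ c (p₀ (σ c⁻¹ (σ c₀ x))))
      (fun c => σ c₀ (σ c (p₀ (σ c⁻¹ x))))
      ?_
    · rw [this]
    · intro c
      show σ c (p₀ (σ c⁻¹ (σ c₀ x))) = σ c₀ (σ (c₀⁻¹ * c) (p₀ (σ (c₀⁻¹ * c)⁻¹ x)))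
      rw [hσσ c⁻¹ c₀ x, hσσ c₀ (c₀⁻¹ * c), mul_inv_rev, inv_inv,
        ← mul_assoc, mul_inv_cancel, one_mul]

end Aux

section Q

variable {k V C : Type*} [Field k] [AddCommGroup V] [Module k V]
    [FiniteDimensional k V] [Group C] [Fintype C]

private lemma reg_on_sub (σ : Representation k C V) (hcard : (Fintype.card C : k) ≠ 0)
    (hreg : ∀ W' W : Submodule k V, W' ≤ W →
      (∀ c : C, ∀ x ∈ W', σ c x ∈ W') → (∀ c : C, ∀ x ∈ W, σ c x ∈ W) →
      W' ≠ W →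
      (∀ T : Submodule k V, W' ≤ T → T ≤ W → (∀ c : C, ∀ x ∈ T, σ c x ∈ T) → T = W' ∨ T = W) →
      ∃ w ∈ W, ∀ c : C, σ c w - w ∈ W' → ∀ x ∈ W, σ c x - x ∈ W') :
    ∀ W : Submodule k V, (∀ c : C, ∀ x ∈ W, σ c x ∈ W) →
      ∃ v ∈ W, (W ≠ ⊥ → v ≠ 0) ∧ ∀ c : C, σ c v = v → ∀ x ∈ W, σ c x = x := by
  intro W
  induction W using WellFoundedLT.induction with
  | _ W IH =>
  intro hWinv
  by_cases hWbot : W = ⊥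
  · refine ⟨0, W.zero_mem, fun h => absurd hWbot h, fun c _ x hx => ?_⟩
    have : x = 0 := by rw [hWbot] at hx; simpa using hx
    rw [this, map_zero]
  -- find a maximal proper invariant submodule of W
  obtain ⟨W', ⟨hW'lt, hW'inv⟩, hW'max⟩ :=
    set_has_maximal_iff_noetherian.mpr inferInstance
      {T : Submodule k V | T < W ∧ ∀ c : C, ∀ x ∈ T, σ c x ∈ T}
      ⟨⊥, bot_lt_iff_ne_bot.mpr hWbot, fun c x hx => by
        simp only [Submodule.mem_bot] at hx ⊢; rw [hx, map_zero]⟩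
  obtain ⟨w₀, hw₀W, Pw₀⟩ := hreg W' W hW'lt.le hW'inv hWinv hW'lt.ne
    (by
      intro T h1 h2 hTinv
      by_cases hT : T = W
      · exact Or.inr hT
      · left
        by_contra hne
        exact hW'max T ⟨h2.lt_of_ne hT, hTinv⟩ (h1.lt_of_ne fun e => hne e.symm))
  -- arrange w ∉ W'
  obtain ⟨w, hwW, hwW', Pw⟩ :
      ∃ w ∈ W, w ∉ W' ∧ ∀ c : C, σ c w - w ∈ W' → ∀ x ∈ W, σ c x - x ∈ W' := by
    by_cases hw0 : w₀ ∈ W'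
    · obtain ⟨w, hwW, hwW'⟩ := SetLike.exists_of_lt hW'lt
      exact ⟨w, hwW, hwW',
        fun c _ x hx => Pw₀ c (sub_mem (hW'inv c _ hw0) hw0) x hx⟩
    · exact ⟨w₀, hw₀W, hw0, Pw₀⟩
  obtain ⟨π, hπmem, hπid, hπcomm⟩ := maschke_proj σ hcard W' hW'inv
  set M : Submodule k V := W ⊓ LinearMap.ker π with hM
  have hMmem : ∀ x, x ∈ M ↔ (x ∈ W ∧ π x = 0) := by
    intro x; rw [hM, Submodule.mem_inf, LinearMap.mem_ker]
  have hMinv : ∀ c : C, ∀ x ∈ M, σ c x ∈ M := by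
    intro c x hx
    rw [hMmem] at hx ⊢
    exact ⟨hWinv c x hx.1, by rw [hπcomm, hx.2, map_zero]⟩
  have hdisj : ∀ x, x ∈ W' → x ∈ M → x = 0 := by
    intro x h1 h2
    rw [hMmem] at h2
    rw [← hπid x h1, h2.2]
  have hπW : ∀ x ∈ W, x - π x ∈ M := by
    intro x hx
    rw [hMmem]
    constructor
    · exact sub_mem hx (hW'lt.le (hπmem x))
    · rw [map_sub, hπid _ (hπmem x), sub_self]
  set w₂ := w - π w with hw₂
  have hw₂M : w₂ ∈ M := hπW w hwW
  have hw₂ne : w₂ ≠ 0 := by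
    intro h
    apply hwW'
    have : w = π w := by rwa [hw₂, sub_eq_zero] at h
    rw [this]; exact hπmem w
  obtain ⟨v', hv'W', -, hv'⟩ := IH W' hW'lt hW'inv
  refine ⟨v' + w₂, W.add_mem (hW'lt.le hv'W') ((hMmem w₂).mp hw₂M).1, ?_, ?_⟩
  · intro _ h0
    apply hw₂ne
    apply hdisj w₂ _ hw₂M
    have : w₂ = -v' := by rw [eq_neg_iff_add_eq_zero, add_comm]; exact h0
    rw [this]; exact neg_mem hv'W'
  · intro c hc x hxW
    have hsum : (σ c v' - v') + (σ c w₂ - w₂) = 0 := by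
      have : σ c v' + σ c w₂ = v' + w₂ := by rw [← map_add]; exact hc
      rw [sub_add_sub_comm, this, sub_self]
    have hcv'0 : σ c v' - v' = 0 := by
      apply hdisj _ (sub_mem (hW'inv c _ hv'W') hv'W')
      rw [eq_neg_of_add_eq_zero_left hsum]
      exact neg_mem (sub_mem (hMinv c _ hw₂M) hw₂M)
    have hcv' : σ c v' = v' := by rwa [sub_eq_zero] at hcv'0
    have hcw₂ : σ c w₂ = w₂ := by
      have : σ c w₂ - w₂ = 0 := by rwa [hcv'0, zero_add] at hsum
      rwa [sub_eq_zero] at this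
    have htrivW' : ∀ y ∈ W', σ c y = y := hv' c hcv'
    have hcw : σ c w - w ∈ W' := by
      have hwsplit : w = π w + w₂ := by rw [hw₂]; abel
      have : σ c w - w = (σ c (π w) - π w) + (σ c w₂ - w₂) := by
        nth_rewrite 1 [hwsplit]
        nth_rewrite 2 [hwsplit]
        rw [map_add]; abel
      rw [this, hcw₂, sub_self, add_zero]
      exact sub_mem (hW'inv c _ (hπmem w)) (hπmem w)
    have H := Pw c hcw
    -- conclude σ c x = x
    have hx₂ : σ c (x - π x) = x - π x := by
      have h1 : σ c (x - π x) - (x - π x) ∈ W' :=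
        H _ (sub_mem hxW (hW'lt.le (hπmem x)))
      have h2 : σ c (x - π x) - (x - π x) ∈ M :=
        sub_mem (hMinv c _ (hπW x hxW)) (hπW x hxW)
      have := hdisj _ h1 h2
      rwa [sub_eq_zero] at this
    have : σ c x = σ c (π x) + σ c (x - π x) := by
      rw [← map_add]; congr 1; abel
    rw [this, htrivW' _ (hπmem x), hx₂]; abel

end Q

private lemma pow_eq_of_order_p {B : Type*} [Group B] [Fintype B] [IsCyclic B]
    {p : ℕ} (hp : p.Prime) {y z : B} (hy : orderOf y = p) (hz : z ^ p = 1) :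
    ∃ j : ℕ, y ^ j = z := by
  classical
  have hcardle : ({a : B | a ^ p = 1} : Finset B).card ≤ p :=
    IsCyclic.card_pow_eq_one_le hp.pos
  set s : Finset B := Finset.univ.filter (fun g => g ∈ Subgroup.zpowers y) with hs
  have hscard : s.card = p := by
    rw [hs, ← Fintype.card_subtype]
    rw [← hy, ← Fintype.card_zpowers]
  have hsub : s ⊆ ({a : B | a ^ p = 1} : Finset B) := by
    intro g hg
    simp only [hs, Finset.mem_filter, Finset.mem_univ, true_and] at hg
    have : orderOf g ∣ p := hy ▸ orderOf_dvd_of_mem_zpowers hg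
    simp only [Finset.mem_filter, Finset.mem_univ, true_and, Set.mem_setOf_eq]
    exact orderOf_dvd_iff_pow_eq_one.mp this
  have heq : s = ({a : B | a ^ p = 1} : Finset B) :=
    Finset.eq_of_subset_of_card_le hsub (hcardle.trans hscard.ge)
  have hzs : z ∈ s := by
    rw [heq]
    simp only [Finset.mem_filter, Finset.mem_univ, true_and, Set.mem_setOf_eq]
    exact hz
  simp only [hs, Finset.mem_filter, Finset.mem_univ, true_and] at hzs
  obtain ⟨j, hj⟩ := (Submonoid.mem_powers_iff _ _).mp (mem_powers_iff_mem_zpowers.mpr hzs)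
  exact ⟨j, hj⟩

private lemma prod_pow' {G H : Type*} [Monoid G] [Monoid H] (g : G) (h : H) (n : ℕ) :
    (g, h) ^ n = (g ^ n, h ^ n) := by
  induction n with
  | zero => simp; rfl
  | succ n ih => rw [pow_succ, pow_succ, pow_succ, ih, Prod.mk_mul_mk]

/-- Let `V` be a faithful finite-dimensional `kA`-module over a finite field
`k` of characteristic `p`. Assume `A = B × C` where `B` is a cyclic `p`-group and `C` is a
`p'`-group which has a regular orbit on every `C`-invariant irreducible section of `V` (i.e.
for every pair of `C`-invariant subspaces `W' ≤ W` such that the section `W / W'` is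
irreducible as a `kC`-module, there is `w ∈ W` whose stabilizer in `C` modulo `W'` equals the
kernel of the `C`-action on `W / W'`). Then `A` has a regular orbit on `V`: there exists
`v ∈ V` with `C_A(v) = 1`. -/
theorem regular_orbit_of_cyclic_p_times_p'_group
    {k : Type*} [Field k] [Fintype k] {p : ℕ} (hp : p.Prime) [CharP k p]
    {B C : Type*} [Group B] [Group C] [Finite B] [Finite C]
    [IsCyclic B] (hB : IsPGroup p B) (hC : ¬ p ∣ Nat.card C)
    {V : Type*} [AddCommGroup V] [Module k V] [FiniteDimensional k V]
    (ρ : Representation k (B × C) V) (hfaith : Function.Injective ρ)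
    (hreg : ∀ W' W : Submodule k V, W' ≤ W →
      (∀ c : C, ∀ x ∈ W', ρ (1, c) x ∈ W') →
      (∀ c : C, ∀ x ∈ W, ρ (1, c) x ∈ W) →
      W' ≠ W →
      (∀ T : Submodule k V, W' ≤ T → T ≤ W →
        (∀ c : C, ∀ x ∈ T, ρ (1, c) x ∈ T) → T = W' ∨ T = W) →
      ∃ w ∈ W, ∀ c : C, ρ (1, c) w - w ∈ W' → ∀ x ∈ W, ρ (1, c) x - x ∈ W') :
    ∃ v : V, ∀ a : B × C, ρ a v = v → a = 1 := by
  classical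
  haveI := Fact.mk hp
  letI : Fintype B := Fintype.ofFinite B
  letI : Fintype C := Fintype.ofFinite C
  set σ : Representation k C V := ρ.comp (MonoidHom.inr B C) with hσdef
  have hσ : ∀ c : C, σ c = ρ (1, c) := fun c => rfl
  have hcard : (Fintype.card C : k) ≠ 0 := by
    rw [Ne, CharP.cast_eq_zero_iff k p]
    rwa [← Nat.card_eq_fintype_card]
  have hregσ : ∀ W' W : Submodule k V, W' ≤ W →
      (∀ c : C, ∀ x ∈ W', σ c x ∈ W') → (∀ c : C, ∀ x ∈ W, σ c x ∈ W) →
      W' ≠ W →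
      (∀ T : Submodule k V, W' ≤ T → T ≤ W → (∀ c : C, ∀ x ∈ T, σ c x ∈ T) → T = W' ∨ T = W) →
      ∃ w ∈ W, ∀ c : C, σ c w - w ∈ W' → ∀ x ∈ W, σ c x - x ∈ W' := by
    simpa only [hσ] using hreg
  have hinj : ∀ g : B × C, (∀ x : V, ρ g x = x) → g = 1 := by
    intro g hg
    apply hfaith
    rw [map_one]
    exact LinearMap.ext fun x => by rw [hg x]; rfl
  -- order of elements of B are powers of p
  have hordB : ∀ g : B, g ≠ 1 → p ∣ orderOf g := by
    intro g hg
    obtain ⟨n, hn⟩ := hB g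
    obtain ⟨m, hmn, hm⟩ := (Nat.dvd_prime_pow hp).mp (orderOf_dvd_of_pow_eq_one hn)
    rcases Nat.eq_zero_or_pos m with h0 | h1
    · exfalso
      apply hg
      have : orderOf g = 1 := by rw [hm, h0, pow_zero]
      exact orderOf_eq_one_iff.mp this
    · rw [hm]
      exact dvd_pow_self p h1.ne'  -- p ∣ p ^ m, m ≥ 1
  by_cases htriv : ∀ g : B, g = 1
  · -- B is trivial
    obtain ⟨v, -, -, hv⟩ := reg_on_sub σ hcard hregσ ⊤ (fun c x _ => trivial)
    refine ⟨v, fun a ha => ?_⟩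
    have ha1 : a = (1, a.2) := by
      rw [Prod.ext_iff]; exact ⟨htriv a.1, rfl⟩
    have hfix : σ a.2 v = v := by rw [hσ, ← ha1]; exact ha
    have := hv a.2 hfix
    have h2 : (1, a.2) = (1 : B × C) := hinj _ (fun x => this x trivial)
    rw [ha1, h2]
  · push_neg at htriv
    obtain ⟨g₀, hg₀⟩ := htriv
    haveI : Nontrivial B := ⟨⟨g₀, 1, hg₀⟩⟩
    have hpdvd : p ∣ Fintype.card B := by
      have := hordB g₀ hg₀
      exact this.trans (orderOf_dvd_card)
    obtain ⟨z, hz⟩ := exists_prime_orderOf_dvd_card p hpdvd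
    set K : Submodule k V := LinearMap.ker (ρ (z, (1 : C)) - LinearMap.id) with hK
    have hKmem : ∀ x, x ∈ K ↔ ρ (z, (1:C)) x = x := by
      intro x
      rw [hK, LinearMap.mem_ker, LinearMap.sub_apply, LinearMap.id_apply, sub_eq_zero]
    have hcomm : ∀ (c : C) (x : V), ρ (z,(1:C)) (σ c x) = σ c (ρ (z,(1:C)) x) := by
      intro c x
      rw [hσ]
      have h1 : (z, (1:C)) * (1, c) = (1, c) * (z, (1:C)) := by
        rw [Prod.mk_mul_mk, Prod.mk_mul_mk, one_mul, mul_one, one_mul, mul_one]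
      have h2 : ρ ((z,(1:C)) * (1,c)) x = ρ (z,(1:C)) (ρ (1,c) x) := by
        rw [map_mul]; rfl
      have h3 : ρ ((1,c) * (z,(1:C))) x = ρ (1,c) (ρ (z,(1:C)) x) := by
        rw [map_mul]; rfl
      rw [← h2, h1, h3]
    have hKinv : ∀ c : C, ∀ x ∈ K, σ c x ∈ K := by
      intro c x hx
      rw [hKmem] at hx ⊢
      rw [hcomm, hx]
    have hKne : K ≠ ⊤ := by
      intro h
      have : (z, (1:C)) = 1 := hinj _ (fun x => (hKmem x).mp (h ▸ Submodule.mem_top))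
      have hz1 : z = 1 := (Prod.ext_iff.mp this).1
      rw [hz1, orderOf_one] at hz
      exact hp.one_lt.ne' hz.symm
    obtain ⟨π, hπmem, hπid, hπcomm⟩ := maschke_proj σ hcard K hKinv
    set M : Submodule k V := LinearMap.ker π with hM
    have hMinv : ∀ c : C, ∀ x ∈ M, σ c x ∈ M := by
      intro c x hx
      rw [hM, LinearMap.mem_ker] at hx ⊢
      rw [hπcomm, hx, map_zero]
    have hdisj : ∀ x, x ∈ K → x ∈ M → x = 0 := by
      intro x h1 h2
      rw [hM, LinearMap.mem_ker] at h2
      rw [← hπid x h1, h2]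
    have hπM : ∀ x : V, x - π x ∈ M := by
      intro x
      rw [hM, LinearMap.mem_ker, map_sub, hπid _ (hπmem x), sub_self]
    have hMne : M ≠ ⊥ := by
      intro h
      apply hKne
      rw [Submodule.eq_top_iff']
      intro x
      have := hπM x
      rw [h, Submodule.mem_bot, sub_eq_zero] at this
      rw [this]
      exact hπmem x
    obtain ⟨v₁, hv₁K, -, hv₁⟩ := reg_on_sub σ hcard hregσ K hKinv
    obtain ⟨v₂, hv₂M, hv₂ne0, hv₂⟩ := reg_on_sub σ hcard hregσ M hMinv
    have hv₂ne : v₂ ≠ 0 := hv₂ne0 hMne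
    refine ⟨v₁ + v₂, ?_⟩
    rintro ⟨g, c⟩ ha
    have hg1 : g = 1 := by
      by_contra hg
      have hfix : ∀ n : ℕ, ρ ((g, c) ^ n) (v₁ + v₂) = v₁ + v₂ := by
        intro n; rw [map_pow]; exact endo_fix_pow _ ha n
      set m := Fintype.card C with hm
      have h1 : ρ (g ^ m, (1:C)) (v₁ + v₂) = v₁ + v₂ := by
        have := hfix m
        rwa [prod_pow', pow_card_eq_one] at this
      have hgm : g ^ m ≠ 1 := by
        intro h
        have hdvd : orderOf g ∣ m := orderOf_dvd_of_pow_eq_one h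
        exact hC (by rw [Nat.card_eq_fintype_card, ← hm]; exact (hordB g hg).trans hdvd)
      -- find an element of order p among powers of g ^ m
      obtain ⟨n', hn'⟩ := hB (g ^ m)
      obtain ⟨s, hsn, hs⟩ := (Nat.dvd_prime_pow hp).mp (orderOf_dvd_of_pow_eq_one hn')
      have hs1 : 1 ≤ s := by
        rcases Nat.eq_zero_or_pos s with h0 | h1
        · exfalso
          apply hgm
          exact orderOf_eq_one_iff.mp (by rw [hs, h0, pow_zero])
        · exact h1
      set y := (g ^ m) ^ (p ^ (s - 1)) with hy
      have hyo : orderOf y = p := by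
        rw [hy, orderOf_pow, hs, Nat.gcd_eq_right (pow_dvd_pow p (Nat.sub_le s 1)),
          Nat.pow_div (Nat.sub_le s 1) hp.pos, Nat.sub_sub_self hs1, pow_one]
      have hyfix : ρ (y, (1:C)) (v₁ + v₂) = v₁ + v₂ := by
        have hyy : ((y : B), (1:C)) = (g ^ m, (1:C)) ^ (p ^ (s-1)) := by
          rw [prod_pow', one_pow, hy]
        rw [hyy, map_pow]
        exact endo_fix_pow _ h1 _
      obtain ⟨j, hj⟩ := pow_eq_of_order_p hp hyo (by rw [← hz]; exact pow_orderOf_eq_one z)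
      have hzfix : ρ (z, (1:C)) (v₁ + v₂) = v₁ + v₂ := by
        have hzz : ((z : B), (1:C)) = (y, (1:C)) ^ j := by
          rw [prod_pow', one_pow, hj]
        rw [hzz, map_pow]
        exact endo_fix_pow _ hyfix _
      have hvK : v₁ + v₂ ∈ K := (hKmem _).mpr hzfix
      have hv₂K : v₂ ∈ K := by
        have := K.sub_mem hvK hv₁K
        rwa [add_sub_cancel_left] at this
      exact hv₂ne (hdisj v₂ hv₂K hv₂M)
    subst hg1
    have hcfix : σ c (v₁ + v₂) = v₁ + v₂ := by rw [hσ]; exact ha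
    have hsum : (σ c v₁ - v₁) + (σ c v₂ - v₂) = 0 := by
      have : σ c v₁ + σ c v₂ = v₁ + v₂ := by rw [← map_add]; exact hcfix
      rw [sub_add_sub_comm, this, sub_self]
    have hcv₁0 : σ c v₁ - v₁ = 0 := by
      apply hdisj _ (K.sub_mem (hKinv c _ hv₁K) hv₁K)
      rw [eq_neg_of_add_eq_zero_left hsum]
      exact M.neg_mem (M.sub_mem (hMinv c _ hv₂M) hv₂M)
    have hcv₁ : σ c v₁ = v₁ := by rwa [sub_eq_zero] at hcv₁0
    have hcv₂ : σ c v₂ = v₂ := by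
      have : σ c v₂ - v₂ = 0 := by rwa [hcv₁0, zero_add] at hsum
      rwa [sub_eq_zero] at this
    have ht1 := hv₁ c hcv₁
    have ht2 := hv₂ c hcv₂
    have hall : ∀ x : V, σ c x = x := by
      intro x
      have : σ c x = σ c (π x) + σ c (x - π x) := by
        rw [← map_add]; congr 1; abel
      rw [this, ht1 _ (hπmem x), ht2 _ (hπM x)]
      abel
    have : ((1 : B), c) = 1 := hinj _ (fun x => by rw [← hσ]; exact hall x)
    exact this
end

section
/- Fix a prime p. Let V be an elementary abelian group of order p³ with basis {v₁, v₂, v₃}, and let A be the subgroup of Aut(V) generated by the automorphisms a₁, a₂ defined by v₁^{a₁} = v₁, v₂^{a₁} = v₁v₂, v₃^{a₁} = v₃ and v₁^{a₂} = v₁, v₂^{a₂} = v₂, v₃^{a₂} = v₃v₁. Then A is elementary abelian of order p², A acts faithfully on V, and every A-orbit on V has length dividing p; in particular, C_A(v) ≠ 1 for every v ∈ V, so A has no regular orbit on V even though O_p(A) is abelian. -/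
/-!
The group generated by `a₁, a₂` is the image of the injective homomorphism
`(c, d) ↦ (v ↦ v + (c v₁ + d v₂) e₀)` from the additive group `𝔽_p²`: these maps compose by
adding parameters because `e₀` is fixed and contributes nothing to `c v₁ + d v₂`. Hence `A ≅ 𝔽_p²`.
The orbit of `v` is `v + L e₀`, where `L` is the image of the linear form `(c, d) ↦ c v₁ + d v₂`,
an additive subgroup of `𝔽_p`; and the stabilizer of `v` is the kernel of that form, which is
nonzero since a linear form on a plane has a nontrivial kernel.
-/

lemma ZMod.closure_ofAdd_single_eq_top (n : ℕ) :
    Subgroup.closure {Multiplicative.ofAdd ((1, 0) : ZMod n × ZMod n), .ofAdd (0, 1)} = ⊤ := by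
  refine eq_top_iff.2 fun x _ => ?_
  obtain ⟨k, hk⟩ := ZMod.intCast_surjective x.toAdd.1
  obtain ⟨l, hl⟩ := ZMod.intCast_surjective x.toAdd.2
  have hx : x = .ofAdd ((1, 0) : ZMod n × ZMod n) ^ k * .ofAdd (0, 1) ^ l := by
    rw [← ofAdd_zsmul, ← ofAdd_zsmul, ← ofAdd_add]
    ext <;> simp [hk, hl]
  rw [hx]
  exact mul_mem (zpow_mem (Subgroup.subset_closure (by simp)) k)
    (zpow_mem (Subgroup.subset_closure (by simp)) l)

namespace Shear

variable {R : Type*} [CommRing R]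

def coeff (v : Fin 3 → R) : R × R →ₗ[R] R :=
  v 1 • LinearMap.fst R R R + v 2 • LinearMap.snd R R R

@[simp]
lemma coeff_apply (v : Fin 3 → R) (c : R × R) : coeff v c = c.1 * v 1 + c.2 * v 2 := by
  simp [coeff, mul_comm]

def toEnd (c : R × R) : Module.End R (Fin 3 → R) :=
  LinearMap.id + LinearMap.smulRight
    (c.1 • LinearMap.proj 1 + c.2 • LinearMap.proj 2 : (Fin 3 → R) →ₗ[R] R) (Pi.single 0 1)

lemma toEnd_apply (c : R × R) (v : Fin 3 → R) :
    toEnd c v = v + coeff v c • Pi.single 0 1 := by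
  simp [toEnd]

lemma toEnd_add (c d : R × R) : toEnd (c + d) = toEnd c * toEnd d := by
  refine LinearMap.ext fun v => ?_
  simp only [Module.End.mul_apply, toEnd_apply, map_add, coeff_apply]
  simp [add_smul, add_assoc, add_left_comm]

def hom : Multiplicative (R × R) →* (Module.End R (Fin 3 → R))ˣ :=
  MonoidHom.toHomUnits
    { toFun := fun c => toEnd c.toAdd
      map_one' := LinearMap.ext fun v => by simp [toEnd_apply]
      map_mul' := fun c d => toEnd_add c.toAdd d.toAdd }

@[simp]
lemma hom_apply (c : Multiplicative (R × R)) (v : Fin 3 → R) :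
    (hom c : Module.End R (Fin 3 → R)) v = v + coeff v c.toAdd • Pi.single 0 1 :=
  toEnd_apply _ _

lemma hom_injective : Function.Injective (hom (R := R)) := by
  intro c d h
  have h1 := congr_arg (fun a : (Module.End R (Fin 3 → R))ˣ =>
    (a : Module.End R (Fin 3 → R)) (Pi.single 1 1) 0) h
  have h2 := congr_arg (fun a : (Module.End R (Fin 3 → R))ˣ =>
    (a : Module.End R (Fin 3 → R)) (Pi.single 2 1) 0) h
  exact Multiplicative.toAdd.injective (Prod.ext (by simpa using h1) (by simpa using h2))

lemma eq_hom_of_apply_single (a : (Module.End R (Fin 3 → R))ˣ) (c : R × R)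
    (h₀ : (a : Module.End R (Fin 3 → R)) (Pi.single 0 1) = Pi.single 0 1)
    (h₁ : (a : Module.End R (Fin 3 → R)) (Pi.single 1 1) = c.1 • Pi.single 0 1 + Pi.single 1 1)
    (h₂ : (a : Module.End R (Fin 3 → R)) (Pi.single 2 1) = c.2 • Pi.single 0 1 + Pi.single 2 1) :
    a = hom (.ofAdd c) := by
  refine Units.ext ((Pi.basisFun R (Fin 3)).ext fun i => ?_)
  fin_cases i <;> simp [h₀, h₁, h₂, add_comm]

lemma exists_mem_range_apply_eq_iff {v w : Fin 3 → R} :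
    (∃ a ∈ (hom (R := R)).range, (a : Module.End R (Fin 3 → R)) v = w) ↔
      w ∈ (fun s => v + s • Pi.single 0 1) '' Set.range (coeff v) := by
  simp [eq_comm]

lemma closure_hom_single_eq_range (n : ℕ) :
    Subgroup.closure {hom (.ofAdd ((1, 0) : ZMod n × ZMod n)), hom (.ofAdd (0, 1))} = hom.range := by
  rw [MonoidHom.range_eq_map, ← ZMod.closure_ofAdd_single_eq_top, MonoidHom.map_closure,
    Set.image_pair]

lemma card_range : Nat.card (hom (R := R)).range = Nat.card R ^ 2 := by
  rw [← Nat.card_congr (MonoidHom.ofInjective (f := hom (R := R)) hom_injective).toEquiv,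
    Nat.card_congr Multiplicative.toAdd, Nat.card_prod, sq]

lemma pow_eq_one_of_mem_range (p : ℕ) [CharP R p] {a : (Module.End R (Fin 3 → R))ˣ}
    (ha : a ∈ (hom (R := R)).range) : a ^ p = 1 := by
  obtain ⟨c, rfl⟩ := ha
  have hc : p • c.toAdd = 0 := Prod.ext (by simp [nsmul_eq_mul]) (by simp [nsmul_eq_mul])
  rw [← map_pow, ← ofAdd_toAdd c, ← ofAdd_nsmul, hc, ofAdd_zero, map_one]

lemma card_orbit_dvd (v : Fin 3 → R) :
    Nat.card {w | ∃ a ∈ (hom (R := R)).range, (a : Module.End R (Fin 3 → R)) v = w} ∣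
      Nat.card R := by
  have hinj : Function.Injective fun s : R => v + s • (Pi.single 0 1 : Fin 3 → R) :=
    fun s t h => by simpa using congr_fun (add_left_cancel h) 0
  simp_rw [exists_mem_range_apply_eq_iff, Set.ofPred_mem_eq, Nat.card_image_of_injective hinj]
  exact (coeff v).range.toAddSubgroup.card_addSubgroup_dvd_card

lemma exists_ne_one_apply_eq {K : Type*} [Field K] (v : Fin 3 → K) :
    ∃ a ∈ (hom (R := K)).range, a ≠ 1 ∧ (a : Module.End K (Fin 3 → K)) v = v := by
  obtain ⟨c, hc, hc0⟩ := Submodule.exists_mem_ne_zero_of_ne_bot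
    ((coeff v).ker_ne_bot_of_finrank_lt (by simp))
  refine ⟨hom (.ofAdd c), ⟨_, rfl⟩, ?_, ?_⟩
  · rw [← map_one hom]
    exact hom_injective.ne hc0
  · simpa using hc

end Shear

/-- Fix a prime `p`. Let `V = (ZMod p)³` with standard basis `v₁, v₂, v₃`
(here `vᵢ = Pi.single i 1`), and let `a₁, a₂` be the linear automorphisms of `V` determined by
`v₁ a₁ = v₁`, `v₂ a₁ = v₁ + v₂`, `v₃ a₁ = v₃` and `v₁ a₂ = v₁`, `v₂ a₂ = v₂`,
`v₃ a₂ = v₁ + v₃`, and let `A ≤ Aut(V)` be the subgroup generated by `a₁` and `a₂`. Then `A`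
is elementary abelian of order `p²`, `A` acts faithfully on `V`, and every `A`-orbit on `V`
has length dividing `p`; in particular `C_A(v) ≠ 1` for every `v ∈ V`, so `A` has no regular
orbit on `V` (even though `O_p(A)` is abelian). -/
theorem no_regular_orbit_example
    {p : ℕ} (hp : p.Prime)
    (a₁ a₂ : (Module.End (ZMod p) (Fin 3 → ZMod p))ˣ)
    (h₁₁ : (a₁ : Module.End (ZMod p) (Fin 3 → ZMod p)) (Pi.single 0 1) = Pi.single 0 1)
    (h₁₂ : (a₁ : Module.End (ZMod p) (Fin 3 → ZMod p)) (Pi.single 1 1) =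
      Pi.single 0 1 + Pi.single 1 1)
    (h₁₃ : (a₁ : Module.End (ZMod p) (Fin 3 → ZMod p)) (Pi.single 2 1) = Pi.single 2 1)
    (h₂₁ : (a₂ : Module.End (ZMod p) (Fin 3 → ZMod p)) (Pi.single 0 1) = Pi.single 0 1)
    (h₂₂ : (a₂ : Module.End (ZMod p) (Fin 3 → ZMod p)) (Pi.single 1 1) = Pi.single 1 1)
    (h₂₃ : (a₂ : Module.End (ZMod p) (Fin 3 → ZMod p)) (Pi.single 2 1) =
      Pi.single 0 1 + Pi.single 2 1)
    (A : Subgroup (Module.End (ZMod p) (Fin 3 → ZMod p))ˣ)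
    (hA : A = Subgroup.closure {a₁, a₂}) :
    Nat.card A = p ^ 2 ∧
      (∀ x ∈ A, ∀ y ∈ A, x * y = y * x) ∧
      (∀ x ∈ A, x ^ p = 1) ∧
      (∀ x ∈ A, (∀ v : Fin 3 → ZMod p,
        (x : Module.End (ZMod p) (Fin 3 → ZMod p)) v = v) → x = 1) ∧
      (∀ v : Fin 3 → ZMod p,
        Nat.card {w : Fin 3 → ZMod p |
          ∃ a ∈ A, (a : Module.End (ZMod p) (Fin 3 → ZMod p)) v = w} ∣ p) ∧
      (∀ v : Fin 3 → ZMod p,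
        ∃ a ∈ A, a ≠ 1 ∧ (a : Module.End (ZMod p) (Fin 3 → ZMod p)) v = v) := by
  have : Fact p.Prime := ⟨hp⟩
  have ha₁ : a₁ = Shear.hom (.ofAdd (1, 0)) :=
    Shear.eq_hom_of_apply_single a₁ _ h₁₁ (by simpa [add_comm] using h₁₂) (by simpa using h₁₃)
  have ha₂ : a₂ = Shear.hom (.ofAdd (0, 1)) :=
    Shear.eq_hom_of_apply_single a₂ _ h₂₁ (by simpa using h₂₂) (by simpa [add_comm] using h₂₃)
  obtain rfl : A = Shear.hom.range := by
    rw [hA, ha₁, ha₂, Shear.closure_hom_single_eq_range]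
  refine ⟨?_, ?_, fun x hx => Shear.pow_eq_one_of_mem_range p hx,
    fun x _ hx => Units.ext (LinearMap.ext hx), fun v => ?_, Shear.exists_ne_one_apply_eq⟩
  · rw [Shear.card_range, Nat.card_zmod]
  · rintro _ ⟨c, rfl⟩ _ ⟨d, rfl⟩
    exact ((Commute.all c d).map Shear.hom).eq
  · simpa using Shear.card_orbit_dvd v
end
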